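/- Let A be a Schur ring over a group G and let C be a basic set of A. Then Stab(C) = {g ∈ G : gC = C} is a finite A-subgroup of G. -/

import Mathlib

open scoped BigOperators

/-- A Schur ring over the group `G` with coefficients in the field `F`, presented by its
partition into finite nonempty basic sets. -/
structure SchurRing (F : Type) [Field F] [CharZero F] (G : Type) [Group G] [DecidableEq G] where
  /-- the basic sets -/
  parts : Set (Finset G)
  nonempty : ∀ C ∈ parts, C.Nonempty
  cover : ∀ g : G, ∃ C ∈ parts, g ∈ C
  eq_or_disjoint : ∀ C ∈ parts, ∀ D ∈ parts, C = D ∨ Disjoint C D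
  one_mem : ({1} : Finset G) ∈ parts
  inv_mem : ∀ C ∈ parts, C.image (·⁻¹) ∈ parts
  mul_mem : ∀ C ∈ parts, ∀ D ∈ parts, ∃ S : Finset (Finset G),
    (↑S : Set (Finset G)) ⊆ parts ∧ ∃ coef : Finset G → F,
      (∑ g ∈ C, MonoidAlgebra.single g (1 : F)) * (∑ g ∈ D, MonoidAlgebra.single g (1 : F))
        = ∑ E ∈ S, coef E • ∑ g ∈ E, MonoidAlgebra.single g (1 : F)

/-- A subset of `G` is an `A`-set if it is a union of basic sets of `A`. -/
def SchurRing.IsASet {F : Type} [Field F] [CharZero F] {G : Type} [Group G] [DecidableEq G]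
    (A : SchurRing F G) (X : Set G) : Prop :=
  ∃ 𝒮 : Set (Finset G), 𝒮 ⊆ A.parts ∧ X = ⋃ C ∈ 𝒮, (C : Set G)

/-!
The coefficient of `g` in `C̄ · C̄*` is `#{e ∈ C | g e ∈ C}`, which equals `|C|` exactly when
`g ∈ Stab(C)`. Since `C̄ · C̄*` lies in `A`, its coefficients are constant on basic sets, so
`Stab(C)` is a union of basic sets. It is finite because `g ↦ g c` injects it into `C`.
-/

open Finset MulAction Pointwise

section SimpleQuantity

variable (F : Type) [Semiring F] {G : Type} [DecidableEq G]

noncomputable def simpleQuantity (C : Finset G) : MonoidAlgebra F G :=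
  ∑ g ∈ C, MonoidAlgebra.single g (1 : F)

variable {F}

lemma coeff_simpleQuantity (C : Finset G) (g : G) :
    (simpleQuantity F C).coeff g = if g ∈ C then 1 else 0 := by
  simp only [simpleQuantity, MonoidAlgebra.coeff_sum, Finset.sum_apply',
    MonoidAlgebra.coeff_single, Finsupp.single_apply, Finset.sum_ite_eq']

lemma coeff_simpleQuantity_mul_inv [Group G] (C : Finset G) (g : G) :
    (simpleQuantity F C * simpleQuantity F (C.image (·⁻¹))).coeff g = #{e ∈ C | g * e ∈ C} := by
  have hinv : simpleQuantity F (C.image (·⁻¹)) = ∑ e ∈ C, MonoidAlgebra.single e⁻¹ (1 : F) :=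
    Finset.sum_image fun a _ b _ h => inv_injective h
  simp only [hinv, Finset.mul_sum, MonoidAlgebra.coeff_sum, Finset.sum_apply',
    MonoidAlgebra.coeff_mul_single_apply, inv_inv, mul_one, coeff_simpleQuantity]
  exact Finset.sum_boole _ _

end SimpleQuantity

section Stabilizer

variable {G : Type} [Group G]

lemma finite_stabilizer_of_nonempty {C : Finset G} (hC : C.Nonempty) :
    (stabilizer G (C : Set G) : Set G).Finite := by
  obtain ⟨c, hc⟩ := hC
  refine Set.Finite.of_injOn (f := (· * c)) (t := C) (fun g hg => ?_)
    (mul_left_injective c).injOn C.finite_toSet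
  rw [SetLike.mem_coe, mem_stabilizer_set] at hg
  exact (hg c).2 hc

lemma mem_stabilizer_iff_card_filter [DecidableEq G] {C : Finset G} {g : G} :
    g ∈ stabilizer G (C : Set G) ↔ #{e ∈ C | g * e ∈ C} = #C := by
  rw [Finset.card_filter_eq_iff, stabilizer_coe_finset, mem_stabilizer_finset_iff_smul_finset_subset]
  exact Finset.image_subset_iff

end Stabilizer

namespace SchurRing

variable {F : Type} [Field F] [CharZero F] {G : Type} [Group G] [DecidableEq G]
  (A : SchurRing F G)

lemma mem_iff_of_mem_parts {D E : Finset G} (hD : D ∈ A.parts) (hE : E ∈ A.parts) {g h : G}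
    (hg : g ∈ D) (hh : h ∈ D) : g ∈ E ↔ h ∈ E := by
  rcases A.eq_or_disjoint E hE D hD with rfl | hdisj
  · exact iff_of_true hg hh
  · exact iff_of_false (Finset.disjoint_right.mp hdisj hg) (Finset.disjoint_right.mp hdisj hh)

lemma coeff_eq_of_mem_parts {S : Finset (Finset G)} (hS : (S : Set (Finset G)) ⊆ A.parts)
    (coef : Finset G → F) {D : Finset G} (hD : D ∈ A.parts) {g h : G} (hg : g ∈ D) (hh : h ∈ D) :
    (∑ E ∈ S, coef E • simpleQuantity F E).coeff g =
      (∑ E ∈ S, coef E • simpleQuantity F E).coeff h := by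
  simp only [MonoidAlgebra.coeff_sum, Finset.sum_apply', MonoidAlgebra.coeff_smul_apply,
    coeff_simpleQuantity]
  refine Finset.sum_congr rfl fun E hE => ?_
  rw [if_congr (A.mem_iff_of_mem_parts hD (hS hE) hg hh) rfl rfl]

lemma isASet_of_forall_mem_parts {X : Set G}
    (hX : ∀ D ∈ A.parts, ∀ g ∈ D, ∀ h ∈ D, g ∈ X → h ∈ X) : A.IsASet X := by
  refine ⟨{D | D ∈ A.parts ∧ (D : Set G) ⊆ X}, fun D hD => hD.1, ?_⟩
  ext g
  simp only [Set.mem_iUnion, Set.mem_ofPred_eq, Finset.mem_coe, exists_prop]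
  refine ⟨fun hg => ?_, fun ⟨D, ⟨_, hDX⟩, hgD⟩ => hDX hgD⟩
  obtain ⟨D, hD, hgD⟩ := A.cover g
  exact ⟨D, ⟨hD, fun h hh => hX D hD g hgD h hh hg⟩, hgD⟩

end SchurRing

/-- For every basic set `C` of a Schur ring `A` over `G`, the stabilizer
`Stab(C) = {g ∈ G : gC = C}` is a finite `A`-subgroup of `G`. -/
theorem stmt_16 (F : Type) [Field F] [CharZero F] (G : Type) [Group G] [DecidableEq G]
    (A : SchurRing F G) (C : Finset G) (hC : C ∈ A.parts) :
    ∃ H : Subgroup G, (H : Set G) = {g : G | (g * ·) '' (C : Set G) = (C : Set G)} ∧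
      (H : Set G).Finite ∧ A.IsASet (H : Set G) := by
  obtain ⟨S, hS, coef, hprod⟩ := A.mul_mem C hC _ (A.inv_mem C hC)
  have hprod : simpleQuantity F C * simpleQuantity F (C.image (·⁻¹)) =
      ∑ E ∈ S, coef E • simpleQuantity F E := hprod
  have hstab (g : G) : g ∈ stabilizer G (C : Set G) ↔
      (∑ E ∈ S, coef E • simpleQuantity F E).coeff g = #C := by
    rw [mem_stabilizer_iff_card_filter, ← Nat.cast_inj (R := F), ← coeff_simpleQuantity_mul_inv,
      hprod]
  refine ⟨stabilizer G (C : Set G), rfl, finite_stabilizer_of_nonempty (A.nonempty C hC),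
    A.isASet_of_forall_mem_parts fun D hD g hg h hh hgX => ?_⟩
  rw [SetLike.mem_coe, hstab] at hgX ⊢
  rwa [← A.coeff_eq_of_mem_parts hS coef hD hg hh]
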